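/- For any λ, λ′ ≥ 0 and any probability measures f, f′ on ℝ, the compound Poisson distributions satisfy dtv( CPoi(λ, f), CPoi(λ′, f′) ) ≤ min{λ, λ′} · dtv(f, f′) + |λ − λ′|. -/

import Mathlib

/-!
Assume `λ ≤ λ'` and pass through `CPoi(λ, f')`.

Changing the increments at a fixed rate costs at most `λ · dtv(f, f')`: convolution with a
probability measure does not increase `dtv`, so `dtv(f^{*k}, f'^{*k}) ≤ k · dtv(f, f')`, and
averaging over `k ~ Poi(λ)` gives the mean `λ`.

Changing the rate at fixed increments costs at most `λ' - λ`: the `Poi(λ')` weights dominate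
`e^{-(λ' - λ)}` times the `Poi(λ)` weights, so `CPoi(λ', f') ≥ e^{-(λ' - λ)} CPoi(λ, f')`, and two
probability measures one of which dominates `t` times the other are at distance at most
`1 - t ≤ λ' - λ`.
-/

open MeasureTheory

noncomputable section

/-- Convolution of two measures on ℝ (law of the sum of independent random
variables). -/
def mconv (μ ν : Measure ℝ) : Measure ℝ :=
  Measure.map (fun z : ℝ × ℝ => z.1 + z.2) (μ.prod ν)

/-- `k`-fold convolution power of a measure on ℝ. -/
def mconvPow (f : Measure ℝ) : ℕ → Measure ℝ
  | 0 => Measure.dirac 0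
  | k + 1 => mconv (mconvPow f k) f

/-- The compound Poisson distribution `CPoi(λ, f)` as a measure on ℝ. -/
def cpoiM (lam : ℝ) (f : Measure ℝ) : Measure ℝ :=
  Measure.sum fun k : ℕ =>
    (ENNReal.ofReal (Real.exp (-lam) * lam ^ k / (Nat.factorial k))) • mconvPow f k

/-- Total variation distance between measures on ℝ:
`sup_A |μ(A) - ν(A)|` over measurable sets `A`. -/
def dtvM (μ ν : Measure ℝ) : ℝ :=
  ⨆ A : {s : Set ℝ // MeasurableSet s}, |(μ A).toReal - (ν A).toReal|

instance : Nonempty {s : Set ℝ // MeasurableSet s} := ⟨⟨∅, .empty⟩⟩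

section TotalVariation

variable {μ ν ρ : Measure ℝ}

lemma dtvM_comm (μ ν : Measure ℝ) : dtvM μ ν = dtvM ν μ := by
  simp only [dtvM, abs_sub_comm]

lemma abs_measureReal_sub_le_dtvM [IsFiniteMeasure μ] [IsFiniteMeasure ν] {A : Set ℝ}
    (hA : MeasurableSet A) : |μ.real A - ν.real A| ≤ dtvM μ ν := by
  have hbdd : BddAbove (Set.range fun B : {s : Set ℝ // MeasurableSet s} =>
      |μ.real B - ν.real B|) := by
    refine ⟨μ.real .univ + ν.real .univ, ?_⟩
    rintro _ ⟨B, rfl⟩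
    calc |μ.real B - ν.real B| ≤ |μ.real B| + |ν.real B| := abs_sub _ _
      _ ≤ μ.real .univ + ν.real .univ := by
        rw [abs_of_nonneg measureReal_nonneg, abs_of_nonneg measureReal_nonneg]
        exact add_le_add (measureReal_mono (Set.subset_univ _))
          (measureReal_mono (Set.subset_univ _))
  exact le_ciSup hbdd ⟨A, hA⟩

lemma dtvM_nonneg [IsFiniteMeasure μ] [IsFiniteMeasure ν] : 0 ≤ dtvM μ ν :=
  (abs_nonneg _).trans (abs_measureReal_sub_le_dtvM .empty)

lemma measure_le_add_dtvM [IsFiniteMeasure μ] [IsFiniteMeasure ν] {A : Set ℝ}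
    (hA : MeasurableSet A) : μ A ≤ ν A + ENNReal.ofReal (dtvM μ ν) := by
  have h : μ.real A ≤ ν.real A + dtvM μ ν := by
    linarith [le_abs_self (μ.real A - ν.real A),
      abs_measureReal_sub_le_dtvM (μ := μ) (ν := ν) hA]
  calc μ A = ENNReal.ofReal (μ.real A) := (ofReal_measureReal).symm
    _ ≤ ENNReal.ofReal (ν.real A + dtvM μ ν) := ENNReal.ofReal_le_ofReal h
    _ ≤ ENNReal.ofReal (ν.real A) + ENNReal.ofReal (dtvM μ ν) := ENNReal.ofReal_add_le
    _ = ν A + ENNReal.ofReal (dtvM μ ν) := by rw [ofReal_measureReal]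

-- One direction suffices: the other follows by passing to complements.
lemma dtvM_le_of_forall_le_add [IsProbabilityMeasure μ] [IsProbabilityMeasure ν] {D : ℝ}
    (hD : 0 ≤ D) (h : ∀ A, MeasurableSet A → μ A ≤ ν A + ENNReal.ofReal D) : dtvM μ ν ≤ D := by
  have hreal : ∀ A, MeasurableSet A → μ.real A ≤ ν.real A + D := fun A hA => by
    simpa [measureReal_def, ENNReal.toReal_add, hD] using
      ENNReal.toReal_mono (by finiteness) (h A hA)
  refine ciSup_le fun ⟨A, hA⟩ => abs_sub_le_iff.2 ⟨?_, ?_⟩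
  · exact sub_le_iff_le_add'.2 (hreal A hA)
  · have hc := hreal Aᶜ hA.compl
    rw [probReal_compl_eq_one_sub hA, probReal_compl_eq_one_sub hA] at hc
    change ν.real A - μ.real A ≤ D
    linarith

lemma dtvM_triangle [IsProbabilityMeasure μ] [IsProbabilityMeasure ν] [IsProbabilityMeasure ρ] :
    dtvM μ ρ ≤ dtvM μ ν + dtvM ν ρ := by
  refine dtvM_le_of_forall_le_add (add_nonneg dtvM_nonneg dtvM_nonneg) fun A hA => ?_
  calc μ A ≤ ν A + ENNReal.ofReal (dtvM μ ν) := measure_le_add_dtvM hA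
    _ ≤ ρ A + ENNReal.ofReal (dtvM ν ρ) + ENNReal.ofReal (dtvM μ ν) := by
      gcongr; exact measure_le_add_dtvM hA
    _ = ρ A + ENNReal.ofReal (dtvM μ ν + dtvM ν ρ) := by
      rw [ENNReal.ofReal_add dtvM_nonneg dtvM_nonneg, add_assoc, add_comm (ENNReal.ofReal _)]

lemma dtvM_le_one_sub_of_smul_le [IsProbabilityMeasure μ] [IsProbabilityMeasure ν] {t : ℝ}
    (ht₀ : 0 ≤ t) (ht₁ : t ≤ 1) (h : ENNReal.ofReal t • μ ≤ ν) : dtvM μ ν ≤ 1 - t := by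
  refine dtvM_le_of_forall_le_add (sub_nonneg.2 ht₁) fun A hA => ?_
  calc μ A = ENNReal.ofReal t * μ A + ENNReal.ofReal (1 - t) * μ A := by
        rw [← add_mul, ← ENNReal.ofReal_add ht₀ (sub_nonneg.2 ht₁), add_sub_cancel,
          ENNReal.ofReal_one, one_mul]
    _ ≤ ν A + ENNReal.ofReal (1 - t) * 1 := add_le_add (h A) (by gcongr; exact prob_le_one)
    _ = ν A + ENNReal.ofReal (1 - t) := by rw [mul_one]

end TotalVariation

section Convolution

variable {μ ν : Measure ℝ}

lemma mconv_eq_conv (μ ν : Measure ℝ) : mconv μ ν = μ ∗ ν := rfl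

instance [IsProbabilityMeasure μ] [IsProbabilityMeasure ν] : IsProbabilityMeasure (mconv μ ν) :=
  inferInstanceAs (IsProbabilityMeasure (μ ∗ ν))

lemma mconv_apply [SFinite μ] [SFinite ν] {A : Set ℝ} (hA : MeasurableSet A) :
    mconv μ ν A = ∫⁻ y, μ ((· + y) ⁻¹' A) ∂ν := by
  rw [mconv, Measure.map_apply measurable_add hA, Measure.prod_apply_symm (measurable_add hA)]
  rfl

lemma dtvM_mconv_le_left [IsProbabilityMeasure μ] [IsProbabilityMeasure ν]
    (ρ : Measure ℝ) [IsProbabilityMeasure ρ] : dtvM (mconv μ ρ) (mconv ν ρ) ≤ dtvM μ ν := by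
  refine dtvM_le_of_forall_le_add dtvM_nonneg fun A hA => ?_
  calc mconv μ ρ A = ∫⁻ y, μ ((· + y) ⁻¹' A) ∂ρ := mconv_apply hA
    _ ≤ ∫⁻ y, ν ((· + y) ⁻¹' A) + ENNReal.ofReal (dtvM μ ν) ∂ρ :=
      lintegral_mono fun y => measure_le_add_dtvM (hA.preimage (measurable_add_const y))
    _ = mconv ν ρ A + ENNReal.ofReal (dtvM μ ν) := by
      rw [lintegral_add_right _ measurable_const, lintegral_const, measure_univ, mul_one,
        mconv_apply hA]

lemma dtvM_mconv_le_right [IsProbabilityMeasure μ] [IsProbabilityMeasure ν]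
    (ρ : Measure ℝ) [IsProbabilityMeasure ρ] : dtvM (mconv ρ μ) (mconv ρ ν) ≤ dtvM μ ν := by
  simpa only [mconv_eq_conv, Measure.conv_comm ρ] using dtvM_mconv_le_left ρ

instance (f : Measure ℝ) [IsProbabilityMeasure f] (k : ℕ) :
    IsProbabilityMeasure (mconvPow f k) := by
  induction k with
  | zero => rw [mconvPow]; infer_instance
  | succ k ih => rw [mconvPow]; infer_instance

lemma dtvM_mconvPow_le (f f' : Measure ℝ) [IsProbabilityMeasure f] [IsProbabilityMeasure f']
    (k : ℕ) : dtvM (mconvPow f k) (mconvPow f' k) ≤ k * dtvM f f' := by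
  induction k with
  | zero => simpa [mconvPow] using dtvM_le_of_forall_le_add le_rfl fun A _ => le_add_right le_rfl
  | succ k ih =>
    calc dtvM (mconv (mconvPow f k) f) (mconv (mconvPow f' k) f')
        ≤ dtvM (mconv (mconvPow f k) f) (mconv (mconvPow f' k) f)
          + dtvM (mconv (mconvPow f' k) f) (mconv (mconvPow f' k) f') := dtvM_triangle
      _ ≤ k * dtvM f f' + dtvM f f' :=
        add_le_add ((dtvM_mconv_le_left f).trans ih) (dtvM_mconv_le_right _)
      _ = (k + 1 : ℕ) * dtvM f f' := by push_cast; ring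

end Convolution

section CompoundPoisson

def poissonWeight (lam : ℝ) (k : ℕ) : ℝ := Real.exp (-lam) * lam ^ k / (Nat.factorial k)

variable {lam lam' : ℝ}

lemma poissonWeight_nonneg (hl : 0 ≤ lam) (k : ℕ) : 0 ≤ poissonWeight lam k := by
  unfold poissonWeight; positivity

lemma hasSum_poissonWeight (lam : ℝ) : HasSum (poissonWeight lam) 1 := by
  unfold poissonWeight
  have h := (NormedSpace.expSeries_div_hasSum_exp lam).mul_left (Real.exp (-lam))
  rw [← Real.exp_eq_exp_ℝ, ← Real.exp_add, neg_add_cancel, Real.exp_zero] at h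
  simpa only [mul_div_assoc] using h

lemma hasSum_mul_poissonWeight (lam : ℝ) :
    HasSum (fun k : ℕ => k * poissonWeight lam k) lam := by
  have hshift (k : ℕ) : ((k : ℝ) + 1) * poissonWeight lam (k + 1) = lam * poissonWeight lam k := by
    simp only [poissonWeight, Nat.factorial_succ, pow_succ]
    push_cast
    field_simp
  rw [← hasSum_nat_add_iff' 1]
  simpa [hshift] using (hasSum_poissonWeight lam).mul_left lam

lemma exp_mul_poissonWeight_le (hl : 0 ≤ lam) (h : lam ≤ lam') (k : ℕ) :
    Real.exp (-(lam' - lam)) * poissonWeight lam k ≤ poissonWeight lam' k := by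
  have hexp : Real.exp (-(lam' - lam)) * Real.exp (-lam) = Real.exp (-lam') := by
    rw [← Real.exp_add]; ring_nf
  unfold poissonWeight
  rw [← mul_div_assoc, ← mul_assoc, hexp]
  gcongr

lemma cpoiM_apply (f : Measure ℝ) {A : Set ℝ} (hA : MeasurableSet A) :
    cpoiM lam f A = ∑' k, ENNReal.ofReal (poissonWeight lam k) * mconvPow f k A := by
  rw [cpoiM, Measure.sum_apply _ hA]
  rfl

lemma isProbabilityMeasure_cpoiM (hl : 0 ≤ lam) (f : Measure ℝ) [IsProbabilityMeasure f] :
    IsProbabilityMeasure (cpoiM lam f) := by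
  constructor
  rw [cpoiM_apply f .univ]
  simp only [measure_univ, mul_one]
  rw [← ENNReal.ofReal_tsum_of_nonneg (poissonWeight_nonneg hl)
    (hasSum_poissonWeight lam).summable, (hasSum_poissonWeight lam).tsum_eq, ENNReal.ofReal_one]

lemma dtvM_cpoiM_le_mul (hl : 0 ≤ lam) (f f' : Measure ℝ) [IsProbabilityMeasure f]
    [IsProbabilityMeasure f'] : dtvM (cpoiM lam f) (cpoiM lam f') ≤ lam * dtvM f f' := by
  have := isProbabilityMeasure_cpoiM hl f
  have := isProbabilityMeasure_cpoiM hl f'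
  set D := dtvM f f'
  have hD : 0 ≤ D := dtvM_nonneg
  have hmean : ∑' k : ℕ, ENNReal.ofReal (poissonWeight lam k) * ENNReal.ofReal (k * D) =
      ENNReal.ofReal (lam * D) := by
    have h := (hasSum_mul_poissonWeight lam).mul_right D
    rw [← h.tsum_eq, ENNReal.ofReal_tsum_of_nonneg
      (fun k => by have := poissonWeight_nonneg hl k; positivity) h.summable]
    congr 1; ext k
    rw [← ENNReal.ofReal_mul (poissonWeight_nonneg hl k)]
    ring_nf
  refine dtvM_le_of_forall_le_add (mul_nonneg hl hD) fun A hA => ?_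
  calc cpoiM lam f A = ∑' k, ENNReal.ofReal (poissonWeight lam k) * mconvPow f k A :=
        cpoiM_apply f hA
    _ ≤ ∑' k : ℕ, ENNReal.ofReal (poissonWeight lam k) *
          (mconvPow f' k A + ENNReal.ofReal (k * D)) := by
      gcongr with k
      exact (measure_le_add_dtvM hA).trans (by gcongr; exact dtvM_mconvPow_le f f' k)
    _ = cpoiM lam f' A + ENNReal.ofReal (lam * D) := by
      simp only [mul_add]
      rw [ENNReal.tsum_add, cpoiM_apply f' hA, hmean]

lemma dtvM_cpoiM_le_one_sub_exp (hl : 0 ≤ lam) (h : lam ≤ lam') (f : Measure ℝ)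
    [IsProbabilityMeasure f] :
    dtvM (cpoiM lam f) (cpoiM lam' f) ≤ 1 - Real.exp (-(lam' - lam)) := by
  have := isProbabilityMeasure_cpoiM hl f
  have := isProbabilityMeasure_cpoiM (hl.trans h) f
  refine dtvM_le_one_sub_of_smul_le (Real.exp_nonneg _)
    (Real.exp_le_one_iff.2 (by linarith)) (Measure.le_iff.2 fun A hA => ?_)
  rw [Measure.smul_apply, smul_eq_mul, cpoiM_apply f hA, cpoiM_apply f hA,
    ← ENNReal.tsum_mul_left]
  refine ENNReal.tsum_le_tsum fun k => ?_
  rw [← mul_assoc, ← ENNReal.ofReal_mul (Real.exp_nonneg _)]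
  gcongr
  exact exp_mul_poissonWeight_le hl h k

end CompoundPoisson

/-- **Lemma (compound Poisson perturbation).**
For any `λ, λ' ≥ 0` and probability measures `f, f'` on ℝ,
`dtv(CPoi(λ, f), CPoi(λ', f')) ≤ min{λ, λ'} dtv(f, f') + |λ - λ'|`. -/
theorem cpoi_perturbation
    (lam lam' : ℝ) (hl : 0 ≤ lam) (hl' : 0 ≤ lam')
    (f f' : Measure ℝ) [IsProbabilityMeasure f] [IsProbabilityMeasure f'] :
    dtvM (cpoiM lam f) (cpoiM lam' f') ≤ min lam lam' * dtvM f f' + |lam - lam'| := by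
  wlog h : lam ≤ lam' generalizing lam lam' f f'
  · have := this lam' lam hl' hl f' f (le_of_not_ge h)
    rwa [dtvM_comm, dtvM_comm f', min_comm, abs_sub_comm] at this
  have := isProbabilityMeasure_cpoiM hl f
  have := isProbabilityMeasure_cpoiM hl f'
  have := isProbabilityMeasure_cpoiM hl' f'
  calc dtvM (cpoiM lam f) (cpoiM lam' f')
      ≤ dtvM (cpoiM lam f) (cpoiM lam f') + dtvM (cpoiM lam f') (cpoiM lam' f') := dtvM_triangle
    _ ≤ lam * dtvM f f' + (1 - Real.exp (-(lam' - lam))) :=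
      add_le_add (dtvM_cpoiM_le_mul hl f f') (dtvM_cpoiM_le_one_sub_exp hl h f')
    _ ≤ min lam lam' * dtvM f f' + |lam - lam'| := by
      rw [min_eq_left h, abs_sub_comm, abs_of_nonneg (sub_nonneg.2 h)]
      linarith [Real.add_one_le_exp (-(lam' - lam))]

end
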